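/- arXiv:alg-geom/9401003 — 2 statements merged into one kernel-verified Lean document; each statement's English description precedes it below -/
import Mathlib

section
/- Let Q = [[λp+1, αp],[βp, μp+1]] be an element of SL(2,ℤ) (with λ, α, β, μ ∈ ℤ) and suppose λ ≡ 0 mod p. Then P^{−β} · Q ∈ Γ₁'(p²), where P = [[1,0],[p,1]]. In particular, every element of Γ₁(p) whose upper-left entry is congruent to 1 mod p² lies in the subgroup of SL(2,ℤ) generated by P and Γ₁'(p²). -/
/-- Membership in `Γ₁(p) ⊆ SL(2,ℤ)`: congruent to the identity mod `p`. -/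
def Gamma1Mem (p : ℕ) (A : Matrix (Fin 2) (Fin 2) ℤ) : Prop :=
  (p : ℤ) ∣ (A 0 0 - 1) ∧ (p : ℤ) ∣ A 0 1 ∧ (p : ℤ) ∣ A 1 0 ∧ (p : ℤ) ∣ (A 1 1 - 1)

/-- Membership in `Γ₁'(p²) ⊆ SL(2,ℤ)`: `A - 1` lies in the pattern `[[p²ℤ,pℤ],[p³ℤ,p²ℤ]]`. -/
def Gamma1'Mem (p : ℕ) (A : Matrix (Fin 2) (Fin 2) ℤ) : Prop :=
  (p : ℤ)^2 ∣ (A 0 0 - 1) ∧ (p : ℤ) ∣ A 0 1 ∧ (p : ℤ)^3 ∣ A 1 0 ∧ (p : ℤ)^2 ∣ (A 1 1 - 1)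

/-- The matrix `P = [[1,0],[p,1]]` as an element of `SL(2,ℤ)`. -/
def Pmat (p : ℕ) : Matrix.SpecialLinearGroup (Fin 2) ℤ :=
  ⟨!![1, 0; (p : ℤ), 1], by norm_num [Matrix.det_fin_two_of]⟩

lemma Ppow (p : ℕ) (n : ℤ) :
    ((Pmat p ^ n : Matrix.SpecialLinearGroup (Fin 2) ℤ) : Matrix (Fin 2) (Fin 2) ℤ)
      = !![1, 0; n * p, 1] := by
  induction n using Int.induction_on with
  | zero => simp [Matrix.one_fin_two]
  | succ k ih =>
      rw [zpow_add_one, Matrix.SpecialLinearGroup.coe_mul, ih]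
      simp only [Pmat, Matrix.mul_fin_two]
      norm_num
      ring
  | pred k ih =>
      rw [zpow_sub_one, Matrix.SpecialLinearGroup.coe_mul, ih]
      have hinv : ((Pmat p)⁻¹ : Matrix.SpecialLinearGroup (Fin 2) ℤ)
          = (⟨!![1, 0; -(p:ℤ), 1], by norm_num [Matrix.det_fin_two_of]⟩ :
            Matrix.SpecialLinearGroup (Fin 2) ℤ) := by
        apply inv_eq_iff_mul_eq_one.mpr
        ext i j
        change (!![1, 0; (p:ℤ), 1] * !![1, 0; -(p:ℤ), 1]) i j = (1 : Matrix (Fin 2) (Fin 2) ℤ) i j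
        fin_cases i <;> fin_cases j <;>
          simp [Pmat, Matrix.mul_fin_two, Matrix.one_fin_two]
      rw [hinv]
      simp only [Matrix.mul_fin_two]
      norm_num
      ring

lemma key (p : ℕ) (hpne : (p : ℤ) ≠ 0) (lam α β μ : ℤ)
    (Q : Matrix.SpecialLinearGroup (Fin 2) ℤ)
    (hQ : (Q : Matrix (Fin 2) (Fin 2) ℤ) =
      !![lam * p + 1, α * p; β * p, μ * p + 1])
    (hlam : (p : ℤ) ∣ lam) :
    Gamma1'Mem p ↑(Pmat p ^ (-β) * Q) := by
  obtain ⟨l, hl⟩ := hlam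
  have hdet : ((Q : Matrix (Fin 2) (Fin 2) ℤ)).det = 1 := Q.property
  rw [hQ, Matrix.det_fin_two_of] at hdet
  have h2 : μ * p = (α * β * p - lam * μ * p - lam) * p := by linear_combination hdet
  have hmu : μ = α * β * p - lam * μ * p - lam := mul_right_cancel₀ hpne h2
  have hmud : (p : ℤ) ∣ μ := by
    rw [hmu, hl]
    exact ⟨α * β - p * l * μ - l, by ring⟩
  obtain ⟨m, hm⟩ := hmud
  have hco : ((Pmat p ^ (-β) * Q : Matrix.SpecialLinearGroup (Fin 2) ℤ) :
      Matrix (Fin 2) (Fin 2) ℤ)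
      = !![lam * p + 1, α * p;
           (p : ℤ)^3 * (-(β * l)), (p : ℤ)^2 * (m - α * β) + 1] := by
    rw [Matrix.SpecialLinearGroup.coe_mul, Ppow, hQ, Matrix.mul_fin_two]
    ext i j
    fin_cases i <;> fin_cases j <;> (simp [hl, hm]; try ring)
  simp only [Gamma1'Mem]
  refine ⟨⟨l, ?_⟩, ⟨α, ?_⟩, ⟨-(β * l), ?_⟩, ⟨m - α * β, ?_⟩⟩ <;> rw [hco]
  · show lam * p + 1 - 1 = (p : ℤ)^2 * l
    rw [hl]; ring
  · show α * p = (p : ℤ) * α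
    ring
  · show (p : ℤ)^3 * (-(β * l)) = (p : ℤ)^3 * -(β * l)
    ring
  · show (p : ℤ)^2 * (m - α * β) + 1 - 1 = (p : ℤ)^2 * (m - α * β)
    ring

/-- if `Q = [[λp+1, αp],[βp, μp+1]] ∈ SL(2,ℤ)` with `p ∣ λ`, then
`P⁻ᵝ · Q ∈ Γ₁'(p²)`; in particular every element of `Γ₁(p)` whose upper-left entry is
`≡ 1 mod p²` lies in the subgroup generated by `P` and `Γ₁'(p²)`. -/
theorem statement10 (p : ℕ) (hp : p.Prime) (hodd : Odd p)
    (lam α β μ : ℤ) (Q : Matrix.SpecialLinearGroup (Fin 2) ℤ)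
    (hQ : (Q : Matrix (Fin 2) (Fin 2) ℤ) =
      !![lam * p + 1, α * p; β * p, μ * p + 1])
    (hlam : (p : ℤ) ∣ lam) :
    Gamma1'Mem p ↑(Pmat p ^ (-β) * Q) ∧
    ∀ Q' : Matrix.SpecialLinearGroup (Fin 2) ℤ,
      Gamma1Mem p ↑Q' → (p : ℤ)^2 ∣ ((Q' : Matrix (Fin 2) (Fin 2) ℤ) 0 0 - 1) →
      Q' ∈ Subgroup.closure
        ({Pmat p} ∪ {g : Matrix.SpecialLinearGroup (Fin 2) ℤ | Gamma1'Mem p ↑g}) := by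
  have hpne : (p : ℤ) ≠ 0 := by exact_mod_cast hp.ne_zero
  refine ⟨key p hpne lam α β μ Q hQ hlam, ?_⟩
  intro Q' hG hsq
  obtain ⟨⟨l', hl'⟩, ⟨a', ha'⟩, ⟨b', hb'⟩, ⟨m', hm'⟩⟩ := hG
  have h00 : (Q' : Matrix (Fin 2) (Fin 2) ℤ) 0 0 = l' * p + 1 := by linarith
  have h01 : (Q' : Matrix (Fin 2) (Fin 2) ℤ) 0 1 = a' * p := by linarith
  have h10 : (Q' : Matrix (Fin 2) (Fin 2) ℤ) 1 0 = b' * p := by linarith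
  have h11 : (Q' : Matrix (Fin 2) (Fin 2) ℤ) 1 1 = m' * p + 1 := by linarith
  have hQ' : ((Q' : Matrix (Fin 2) (Fin 2) ℤ))
      = !![l' * p + 1, a' * p; b' * p, m' * p + 1] := by
    rw [Matrix.eta_fin_two ((Q' : Matrix (Fin 2) (Fin 2) ℤ)), h00, h01, h10, h11]
  have hl'div : (p : ℤ) ∣ l' := by
    obtain ⟨c, hc⟩ := hsq
    have hcl : (p : ℤ) * l' = (p : ℤ) * ((p : ℤ) * c) := by rw [← hl', hc]; ring
    exact ⟨c, mul_left_cancel₀ hpne hcl⟩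
  have hmem : Gamma1'Mem p ↑(Pmat p ^ (-b') * Q') := key p hpne l' a' b' m' Q' hQ' hl'div
  have hdecomp : Q' = Pmat p ^ b' * (Pmat p ^ (-b') * Q') := by group
  rw [hdecomp]
  have hP : Pmat p ∈ Subgroup.closure
      ({Pmat p} ∪ {g : Matrix.SpecialLinearGroup (Fin 2) ℤ | Gamma1'Mem p ↑g}) :=
    Subgroup.subset_closure (Or.inl rfl)
  exact mul_mem (zpow_mem hP b') (Subgroup.subset_closure (Or.inr hmem))
end

section
/- The smallest subgroup of SL(2,ℤ) that contains the matrix P = [[1,0],[p,1]] and the subgroup Γ₁'(p²) and is closed under conjugation by arbitrary elements of SL(2,ℤ) (i.e., the normal closure in SL(2,ℤ) of the subgroup generated by P and Γ₁'(p²)) is equal to Γ₁(p). -/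
/-!
`Γ₁(p)` is normal and contains `P` and `Γ₁'(p²)`, which gives one inclusion. Conversely, for
`A ∈ Γ₁(p)` with top-left entry `1 + p a`, the conjugate `g = T⁻ᵃ P Tᵃ` makes the top-left entry
of `g A` congruent to `1` mod `p²`. Left multiplication by a power of `P` fixes the first row and
shifts the bottom-left entry by any multiple of `p · (gA)₀₀`, so it can be made divisible by `p³`;
the determinant then forces the bottom-right entry to be `1` mod `p²`, so `Pᵏ g A ∈ Γ₁'(p²)`.
-/

open MatrixGroups Subgroup ModularGroup CongruenceSubgroup

lemma gamma1Mem_iff_mem_Gamma (p : ℕ) (γ : SL(2, ℤ)) : Gamma1Mem p γ ↔ γ ∈ Gamma p := by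
  simp only [Gamma_mem, Gamma1Mem, ← ZMod.intCast_zmod_eq_zero_iff_dvd, Int.cast_sub,
    Int.cast_one, sub_eq_zero]

lemma Gamma1'Mem.gamma1Mem {p : ℕ} {A : Matrix (Fin 2) (Fin 2) ℤ} (h : Gamma1'Mem p A) :
    Gamma1Mem p A :=
  ⟨(dvd_pow_self _ two_ne_zero).trans h.1, h.2.1, (dvd_pow_self _ three_ne_zero).trans h.2.2.1,
    (dvd_pow_self _ two_ne_zero).trans h.2.2.2⟩

lemma Pmat_mem_Gamma (p : ℕ) : Pmat p ∈ Gamma p :=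
  (gamma1Mem_iff_mem_Gamma p _).1 (by simp [Gamma1Mem, Pmat])

lemma coe_Pmat_zpow (p : ℕ) (k : ℤ) :
    ((Pmat p ^ k : SL(2, ℤ)) : Matrix (Fin 2) (Fin 2) ℤ) = !![1, 0; (p : ℤ) * k, 1] := by
  induction k with
  | zero => rw [zpow_zero, Matrix.SpecialLinearGroup.coe_one, mul_zero, Matrix.one_fin_two]
  | succ k ih =>
    rw [zpow_add_one, Matrix.SpecialLinearGroup.coe_mul, ih, Pmat, Matrix.mul_fin_two]
    congrm !![?_, ?_; ?_, ?_] <;> ring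
  | pred k ih =>
    rw [zpow_sub_one, Matrix.SpecialLinearGroup.coe_mul, ih, Matrix.SpecialLinearGroup.coe_inv,
      Pmat, Matrix.adjugate_fin_two_of, Matrix.mul_fin_two]
    congrm !![?_, ?_; ?_, ?_] <;> ring

lemma coe_T_zpow_conj_Pmat (p : ℕ) (b : ℤ) :
    ((T ^ b * Pmat p * (T ^ b)⁻¹ : SL(2, ℤ)) : Matrix (Fin 2) (Fin 2) ℤ) =
      !![1 + p * b, -(p * b ^ 2); (p : ℤ), 1 - p * b] := by
  rw [← zpow_neg, Matrix.SpecialLinearGroup.coe_mul, Matrix.SpecialLinearGroup.coe_mul,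
    coe_T_zpow, coe_T_zpow, Pmat, Matrix.mul_fin_two, Matrix.mul_fin_two]
  congrm !![?_, ?_; ?_, ?_] <;> ring

lemma gamma1'Mem_of_det_eq_one {p : ℕ} {A : Matrix (Fin 2) (Fin 2) ℤ} (hdet : A.det = 1)
    (h00 : (p : ℤ) ^ 2 ∣ A 0 0 - 1) (h01 : (p : ℤ) ∣ A 0 1) (h10 : (p : ℤ) ^ 3 ∣ A 1 0) :
    Gamma1'Mem p A := by
  refine ⟨h00, h01, h10, ?_⟩
  obtain ⟨x, hx⟩ := h00
  obtain ⟨y, hy⟩ := h01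
  obtain ⟨z, hz⟩ := h10
  rw [Matrix.det_fin_two] at hdet
  exact ⟨p ^ 2 * y * z - x * A 1 1,
    by linear_combination hdet - A 1 1 * hx + A 1 0 * hy + p * y * hz⟩

lemma sq_dvd_T_zpow_conj_Pmat_mul_sub_one {p : ℕ} {A : SL(2, ℤ)} {a c : ℤ}
    (ha : A 0 0 - 1 = p * a) (hc : A 1 0 = p * c) :
    (p : ℤ) ^ 2 ∣ (T ^ (-a) * Pmat p * (T ^ (-a))⁻¹ * A) 0 0 - 1 := by
  rw [Matrix.SpecialLinearGroup.coe_mul, coe_T_zpow_conj_Pmat, Matrix.mul_apply, Fin.sum_univ_two]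
  simp only [Matrix.of_apply, Matrix.cons_val', Matrix.cons_val_zero, Matrix.cons_val_one,
    Matrix.cons_val_fin_one, eq_add_of_sub_eq' ha, hc]
  exact ⟨-(a ^ 2 * (1 + c)), by ring⟩

lemma Pmat_zpow_mul_apply_zero (p : ℕ) (k : ℤ) (g : SL(2, ℤ)) : (Pmat p ^ k * g) 0 = g 0 := by
  ext j
  simp [coe_Pmat_zpow, Matrix.vecMul, dotProduct, Fin.sum_univ_succ]

lemma Pmat_zpow_mul_apply_one_zero (p : ℕ) (k : ℤ) (g : SL(2, ℤ)) :
    (Pmat p ^ k * g) 1 0 = p * k * g 0 0 + g 1 0 := by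
  simp [coe_Pmat_zpow, Matrix.mul_apply, Fin.sum_univ_two]

lemma gamma1'Mem_Pmat_zpow_mul {p : ℕ} {B : SL(2, ℤ)} {c : ℤ}
    (h00 : (p : ℤ) ^ 2 ∣ B 0 0 - 1) (h01 : (p : ℤ) ∣ B 0 1) (hc : B 1 0 = p * c) :
    Gamma1'Mem p ↑(Pmat p ^ (-c) * B) := by
  obtain ⟨x, hx⟩ := h00
  refine gamma1'Mem_of_det_eq_one (Pmat p ^ (-c) * B).det_coe ?_ ?_ ⟨-(c * x), ?_⟩
  · rw [Pmat_zpow_mul_apply_zero]; exact ⟨x, hx⟩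
  · rw [Pmat_zpow_mul_apply_zero]; exact h01
  · rw [Pmat_zpow_mul_apply_one_zero]; linear_combination (-(p : ℤ) * c) * hx + hc

theorem statement11_general (p : ℕ) :
    (↑(Subgroup.normalClosure
        ({Pmat p} ∪ {g : Matrix.SpecialLinearGroup (Fin 2) ℤ | Gamma1'Mem p ↑g})) :
      Set (Matrix.SpecialLinearGroup (Fin 2) ℤ)) =
      {g : Matrix.SpecialLinearGroup (Fin 2) ℤ | Gamma1Mem p ↑g} := by
  set N := normalClosure ({Pmat p} ∪ {g : SL(2, ℤ) | Gamma1'Mem p ↑g})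
  have : (Gamma p).Normal := Gamma_normal p
  have hN : N ≤ Gamma p := normalClosure_le_normal <| by
    rintro g (rfl | hg)
    exacts [Pmat_mem_Gamma p, (gamma1Mem_iff_mem_Gamma p g).1 hg.gamma1Mem]
  ext A
  refine ⟨fun hA => (gamma1Mem_iff_mem_Gamma p A).2 (hN hA), fun hA => ?_⟩
  have hP : Pmat p ∈ N := subset_normalClosure (Or.inl rfl)
  obtain ⟨a, ha⟩ := hA.1
  obtain ⟨c, hc⟩ := hA.2.2.1
  set g := T ^ (-a) * Pmat p * (T ^ (-a))⁻¹
  have hg : g ∈ N := normalClosure_normal.conj_mem _ hP _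
  have hgA : Gamma1Mem p ↑(g * A) :=
    (gamma1Mem_iff_mem_Gamma p _).2 (mul_mem (hN hg) ((gamma1Mem_iff_mem_Gamma p A).1 hA))
  obtain ⟨d, hd⟩ := hgA.2.2.1
  have hE : Pmat p ^ (-d) * (g * A) ∈ N := subset_normalClosure <| Or.inr <|
    gamma1'Mem_Pmat_zpow_mul (sq_dvd_T_zpow_conj_Pmat_mul_sub_one ha hc) hgA.2.1 hd
  rw [show A = (Pmat p ^ (-d) * g)⁻¹ * (Pmat p ^ (-d) * (g * A)) by group]
  exact mul_mem (inv_mem (mul_mem (zpow_mem hP _) hg)) hE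

/-- the normal closure in `SL(2,ℤ)` of the subgroup generated by
`P = [[1,0],[p,1]]` and `Γ₁'(p²)` equals `Γ₁(p)`. -/
theorem statement11 (p : ℕ) (hp : p.Prime) (hodd : Odd p) :
    (↑(Subgroup.normalClosure
        ({Pmat p} ∪ {g : Matrix.SpecialLinearGroup (Fin 2) ℤ | Gamma1'Mem p ↑g})) :
      Set (Matrix.SpecialLinearGroup (Fin 2) ℤ)) =
      {g : Matrix.SpecialLinearGroup (Fin 2) ℤ | Gamma1Mem p ↑g} :=
  statement11_general p
end
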